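/- For all real constants c₁, c₂, κ₁, κ₂, the path x(t) = R(t)·(c₁ − t, c₂ + t)ᵀ + (κ₁, κ₂)ᵀ satisfies x''(t) = R(t)·((−1, −1)ᵀ + M(t)·x'(t)) with M(t) = ((sin t, −cos t), (cos t, sin t)), for all t ∈ ℝ. -/

import Mathlib

open Real

noncomputable def rot (t : ℝ) (p : ℝ × ℝ) : ℝ × ℝ :=
  (Real.cos t * p.1 - Real.sin t * p.2, Real.sin t * p.1 + Real.cos t * p.2)

/-! Since `R' = R ∘ R(π/2)`, the curve `s ↦ R(θ s) p(s)` has derivative `R(θ)(θ' R(π/2) p + p')`.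
With `p(s) = (c₁ - s, c₂ + s)` this gives `x' = R(t) q` for `q = R(π/2) p + (-1, 1)`, whose
derivative is `(-1, -1)`, and then `x'' = R(t) (R(π/2) q + (-1, -1))`. The matrix `M(t)` is
`R(π/2 - t)`, so `M(t) x' = R(π/2) q` and the two sides agree. -/

lemma rot_rot (a b : ℝ) (p : ℝ × ℝ) : rot a (rot b p) = rot (a + b) p := by
  simp only [rot, cos_add, sin_add, Prod.mk.injEq]
  constructor <;> ring

lemma rot_pi_div_two (p : ℝ × ℝ) : rot (π / 2) p = (-p.2, p.1) := by
  simp [rot]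

lemma rot_pi_div_two_sub (t : ℝ) (p : ℝ × ℝ) :
    rot (π / 2 - t) p = (sin t * p.1 - cos t * p.2, cos t * p.1 + sin t * p.2) := by
  simp [rot, cos_pi_div_two_sub, sin_pi_div_two_sub]

theorem hasDerivAt_rot {θ : ℝ → ℝ} {p : ℝ → ℝ × ℝ} {θ' t : ℝ} {p' : ℝ × ℝ}
    (hθ : HasDerivAt θ θ' t) (hp : HasDerivAt p p' t) :
    HasDerivAt (fun s => rot (θ s) (p s)) (rot (θ t) (θ' • rot (π / 2) (p t) + p')) t := by
  have h₁ : HasDerivAt (fun s => (p s).1) p'.1 t := hp.fst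
  have h₂ : HasDerivAt (fun s => (p s).2) p'.2 t := hp.snd
  have hc := hθ.cos
  have hs := hθ.sin
  convert ((hc.mul h₁).sub (hs.mul h₂)).prodMk ((hs.mul h₁).add (hc.mul h₂)) using 1
  · rfl
  rw [rot_pi_div_two]
  simp only [rot, Prod.smul_mk, Prod.fst_add, Prod.snd_add, smul_eq_mul, Prod.mk.injEq]
  constructor <;> ring

theorem stmt_10 (c₁ c₂ κ₁ κ₂ : ℝ) (x : ℝ → ℝ × ℝ)
    (hx : ∀ t : ℝ, x t = rot t (c₁ - t, c₂ + t) + (κ₁, κ₂)) :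
    ∀ t : ℝ,
      deriv (deriv x) t =
        rot t ((-1, -1) +
          (sin t * (deriv x t).1 - cos t * (deriv x t).2,
           cos t * (deriv x t).1 + sin t * (deriv x t).2)) := by
  set p : ℝ → ℝ × ℝ := fun s => (c₁ - s, c₂ + s)
  set q : ℝ → ℝ × ℝ := fun s => rot (π / 2) (p s) + (-1, 1)
  have hp (s : ℝ) : HasDerivAt p (-1, 1) s :=
    ((hasDerivAt_id s).const_sub c₁).prodMk ((hasDerivAt_id s).const_add c₂)
  have hdx : deriv x = fun s => rot s (q s) := by
    funext s
    rw [funext hx]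
    simpa [q] using ((hasDerivAt_rot (hasDerivAt_id s) (hp s)).add_const (κ₁, κ₂)).deriv
  have hq (s : ℝ) : HasDerivAt q (-1, -1) s :=
    ((hasDerivAt_rot (hasDerivAt_const s (π / 2)) (hp s)).add_const _).congr_deriv
      (by simp [rot_pi_div_two])
  intro t
  rw [hdx, (hasDerivAt_rot (hasDerivAt_id' t) (hq t)).deriv, ← rot_pi_div_two_sub, rot_rot,
    sub_add_cancel, one_smul, add_comm]
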